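/- arXiv:0812.1374 — 3 statements merged into one kernel-verified Lean document; each statement's English description precedes it below -/
import Mathlib

section
/- For 0 < α ≤ 1, arbitrary x > 0, and complex s with Re(s) > 0 and s ≠ 1, the Hurwitz zeta function satisfies ζ(s,α) - x^{1-s}/(s-1) = ∑_{0 ≤ n ≤ x-α} (n+α)^{-s} + ψ(x-α)·x^{-s} - s·∫_x^∞ ψ(u-α)/u^{s+1} du, where ψ(u) = u - ⌊u⌋ - 1/2. -/
/-!
For `Re s > 1`, let `β = N + α` be the first shift of `α` beyond `x`. Each term `(n + β)^{-s}`
equals `s ∫_{n+β}^∞ u^{-s-1} du`, so the tail `∑_{n ≥ N} (n + α)^{-s}` of the Hurwitz series is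
`s ∫_x^∞ (⌊u - β⌋ + 1) u^{-s-1} du`. Writing `⌊u - β⌋ + 1 = u - β + 1/2 - ψ(u - β)` and integrating
the linear part gives the formula, because `ψ` has period one and `ψ(x - β) = x - β + 1/2`.
The right-hand side is holomorphic on `Re s > 0`, the integral being the Mellin transform of a
bounded function supported on `(x, ∞)`, so the identity extends from `Re s > 1` to the connected
set `{Re s > 0, s ≠ 1}`.
-/

open Complex MeasureTheory

/-- The sawtooth function `ψ(u) = u - ⌊u⌋ - 1/2`. -/
noncomputable def saw (u : ℝ) : ℝ := u - ⌊u⌋ - 1/2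

open Set Filter

lemma saw_eq_fract_sub_half (u : ℝ) : saw u = Int.fract u - 1 / 2 := rfl

lemma saw_sub_natCast (u : ℝ) (n : ℕ) : saw (u - n) = saw u := by
  simp only [saw_eq_fract_sub_half, Int.fract_sub_natCast]

@[fun_prop]
lemma measurable_saw : Measurable saw := measurable_fract.sub_const _

lemma norm_saw_le (u : ℝ) : ‖(saw u : ℂ)‖ ≤ 1 / 2 := by
  rw [norm_real, Real.norm_eq_abs, saw_eq_fract_sub_half, abs_le]
  constructor <;> linarith [Int.fract_nonneg u, Int.fract_lt_one u]

lemma lt_toNat_floor_add_one_iff {y : ℝ} {n : ℕ} : n < (⌊y⌋ + 1).toNat ↔ (n : ℝ) ≤ y := by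
  rw [Int.lt_toNat, Int.lt_add_one_iff, Int.le_floor, Int.cast_natCast]

lemma cast_toNat_floor_add_one {y : ℝ} (hy : -1 ≤ y) : ((⌊y⌋ + 1).toNat : ℝ) = ⌊y⌋ + 1 := by
  have : (-1 : ℤ) ≤ ⌊y⌋ := Int.le_floor.mpr (by simpa using hy)
  exact_mod_cast Int.toNat_of_nonneg (by omega)

lemma filter_le_sub_eq_range {x α : ℝ} :
    (Finset.range (⌊x - α⌋₊ + 1)).filter (fun n : ℕ ↦ (n : ℝ) ≤ x - α) =
      Finset.range (⌊x - α⌋ + 1).toNat := by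
  ext n
  simp only [Finset.mem_filter, Finset.mem_range, lt_toNat_floor_add_one_iff]
  exact ⟨And.right, fun h ↦ ⟨Nat.lt_succ_of_le (Nat.le_floor h), h⟩⟩

lemma cpow_one_sub_eq_mul_cpow_neg {x : ℝ} (hx : 0 < x) (s : ℂ) :
    (x : ℂ) ^ (1 - s) = x * (x : ℂ) ^ (-s) := by
  rw [sub_eq_add_neg, cpow_add _ _ (ofReal_ne_zero.mpr hx.ne'), cpow_one]

lemma integral_Ioi_cpow_neg_add_one {c : ℝ} (hc : 0 < c) {s : ℂ} (hs : 0 < s.re) :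
    ∫ u in Ioi c, (u : ℂ) ^ (-(s + 1)) = (c : ℂ) ^ (-s) / s := by
  rw [integral_Ioi_cpow_of_lt (by simp; linarith) hc, show -(s + 1) + 1 = -s by ring,
    neg_div_neg_eq]

lemma integral_Ioi_norm_cpow_neg_add_one {c : ℝ} (hc : 0 < c) {s : ℂ} (hs : 0 < s.re) :
    ∫ u in Ioi c, ‖(u : ℂ) ^ (-(s + 1))‖ = c ^ (-s.re) / s.re := by
  rw [setIntegral_congr_fun measurableSet_Ioi fun u (hu : c < u) ↦
      norm_cpow_eq_rpow_re_of_pos (hc.trans hu) _,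
    integral_Ioi_rpow_of_lt (by simp; linarith) hc]
  simp

lemma integral_Ioi_cpow_neg {c : ℝ} (hc : 0 < c) {s : ℂ} (hs : 1 < s.re) :
    ∫ u in Ioi c, (u : ℂ) ^ (-s) = (c : ℂ) ^ (1 - s) / (s - 1) := by
  rw [integral_Ioi_cpow_of_lt (by simp; linarith) hc, neg_add_eq_sub, ← neg_sub s 1, div_neg,
    neg_div, neg_neg]

lemma setIntegral_Ioi_indicator_Ici {E : Type*} [NormedAddCommGroup E] [NormedSpace ℝ E]
    {x a : ℝ} (h : x ≤ a) (f : ℝ → E) :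
    ∫ u in Ioi x, (Ici a).indicator f u = ∫ u in Ioi a, f u := by
  rw [setIntegral_indicator measurableSet_Ici,
    setIntegral_congr_set ((ae_eq_refl _).inter Ioi_ae_eq_Ici.symm), Ioi_inter_Ioi,
    sup_eq_right.mpr h]

lemma tsum_cpow_neg_eq_mul_integral_count {x : ℝ} {a : ℕ → ℝ} {s : ℂ} (hx : 0 < x)
    (hxa : ∀ n, x ≤ a n) (hs : 0 < s.re) (ha : Summable fun n ↦ a n ^ (-s.re)) :
    ∑' n, (a n : ℂ) ^ (-s) =
      s * ∫ u in Ioi x, (∑' n, (Ici (a n)).indicator 1 u) * (u : ℂ) ^ (-(s + 1)) := by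
  have hs_ne : s ≠ 0 := fun h ↦ by simp [h] at hs
  have hpos n : 0 < a n := hx.trans_le (hxa n)
  set F : ℕ → ℝ → ℂ := fun n ↦ (Ici (a n)).indicator fun u ↦ (u : ℂ) ^ (-(s + 1))
  have hF_int n : Integrable (F n) (volume.restrict (Ioi x)) :=
    (integrableOn_Ioi_cpow_of_lt (by simp; linarith) hx).indicator measurableSet_Ici
  have hF_norm : Summable fun n ↦ ∫ u in Ioi x, ‖F n u‖ := by
    simp_rw [F, norm_indicator_eq_indicator_norm, setIntegral_Ioi_indicator_Ici (hxa _),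
      integral_Ioi_norm_cpow_neg_add_one (hpos _) hs]
    exact ha.div_const _
  calc ∑' n, (a n : ℂ) ^ (-s) = s * ∑' n, ∫ u in Ioi x, F n u := by
        simp_rw [F, setIntegral_Ioi_indicator_Ici (hxa _),
          integral_Ioi_cpow_neg_add_one (hpos _) hs, tsum_div_const, mul_div_cancel₀ _ hs_ne]
    _ = _ := by
        rw [integral_tsum_of_summable_integral_norm hF_int hF_norm]
        congr 1
        refine integral_congr_ae (ae_of_all _ fun u ↦ ?_)
        dsimp only
        rw [← tsum_mul_right]
        exact tsum_congr fun n ↦ by simp [F, indicator_apply]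

lemma tsum_indicator_Ici_natCast_add {β u : ℝ} (h : β ≤ u + 1) :
    ∑' n : ℕ, (Ici ((n : ℝ) + β)).indicator (1 : ℝ → ℂ) u = ⌊u - β⌋ + 1 := by
  have hmem (n : ℕ) : u ∈ Ici ((n : ℝ) + β) ↔ n ∈ Finset.range (⌊u - β⌋ + 1).toNat := by
    rw [mem_Ici, Finset.mem_range, lt_toNat_floor_add_one_iff, le_sub_iff_add_le]
  have hcount : ((⌊u - β⌋ + 1).toNat : ℂ) = ⌊u - β⌋ + 1 := by
    exact_mod_cast cast_toNat_floor_add_one (by linarith)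
  simp_rw [indicator_apply, hmem, Pi.one_apply]
  rw [tsum_eq_sum (s := Finset.range (⌊u - β⌋ + 1).toNat) (by simp +contextual),
    Finset.sum_ite_mem, Finset.inter_self, Finset.sum_const, Finset.card_range, nsmul_one,
    hcount]

lemma integral_Ioi_div_cpow_eq_mellin {x : ℝ} (hx : 0 ≤ x) (f : ℝ → ℂ) (z : ℂ) :
    ∫ u in Ioi x, f u / (u : ℂ) ^ (z + 1) = mellin ((Ioi x).indicator f) (-z) := by
  have h : (fun t : ℝ ↦ (t : ℂ) ^ (-z - 1) • (Ioi x).indicator f t) =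
      (Ioi x).indicator fun t ↦ (t : ℂ) ^ (-z - 1) • f t :=
    funext fun t ↦ by by_cases ht : t ∈ Ioi x <;> simp [ht]
  rw [mellin, h, setIntegral_indicator measurableSet_Ioi, Ioi_inter_Ioi, sup_eq_right.mpr hx]
  refine setIntegral_congr_fun measurableSet_Ioi fun u _ ↦ ?_
  rw [smul_eq_mul, show -z - 1 = -(z + 1) by ring, cpow_neg, div_eq_inv_mul]

section BoundedWeight

variable {f : ℝ → ℂ} {C x : ℝ}

lemma integrableOn_Ioi_mul_cpow_neg_add_one (hf : Measurable f) (hC : ∀ u, ‖f u‖ ≤ C)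
    (hx : 0 < x) {s : ℂ} (hs : 0 < s.re) :
    IntegrableOn (fun u ↦ f u * (u : ℂ) ^ (-(s + 1))) (Ioi x) :=
  (integrableOn_Ioi_cpow_of_lt (by simp; linarith) hx).bdd_mul hf.aestronglyMeasurable
    (ae_of_all _ hC)

lemma differentiableOn_integral_Ioi_div_cpow (hf : Measurable f) (hC : ∀ u, ‖f u‖ ≤ C)
    (hx : 0 < x) :
    DifferentiableOn ℂ (fun z ↦ ∫ u in Ioi x, f u / (u : ℂ) ^ (z + 1)) {z : ℂ | 0 < z.re} := by
  intro z hz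
  simp_rw [integral_Ioi_div_cpow_eq_mellin hx.le]
  refine DifferentiableAt.differentiableWithinAt
    (DifferentiableAt.comp (g := mellin _) z ?_ differentiableAt_id.neg)
  have hg_bdd (u : ℝ) : ‖(Ioi x).indicator f u‖ ≤ C :=
    (norm_indicator_le_norm_self f u).trans (hC u)
  refine mellin_differentiableAt_of_isBigO_rpow (a := 0) (b := -z.re - 1) ?_ ?_
    (by simpa using (hz : 0 < z.re)) ?_ (by simp)
  · exact ((memLp_top_of_bound hf.aestronglyMeasurable C (ae_of_all _ hC)).locallyIntegrable
      le_top).indicator measurableSet_Ioi |>.locallyIntegrableOn _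
  · exact Asymptotics.IsBigO.of_bound C (Eventually.of_forall fun u ↦ by simpa using hg_bdd u)
  · have : (Ioi x).indicator f =ᶠ[nhdsWithin 0 (Ioi 0)] 0 := by
      filter_upwards [nhdsWithin_le_nhds (Iio_mem_nhds hx)] with u (hu : u < x)
      exact indicator_of_notMem (not_lt.mpr hu.le) f
    exact this.trans_isBigO (Asymptotics.isBigO_zero _ _)

end BoundedWeight

lemma integral_Ioi_floor_add_one_mul_cpow {x β : ℝ} {s : ℂ} (hx : 0 < x) (hs : 1 < s.re) :
    ∫ u in Ioi x, ((⌊u - β⌋ : ℂ) + 1) * (u : ℂ) ^ (-(s + 1)) =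
      (x : ℂ) ^ (1 - s) / (s - 1) + (1 / 2 - β) * ((x : ℂ) ^ (-s) / s)
        - ∫ u in Ioi x, (saw (u - β) : ℂ) * (u : ℂ) ^ (-(s + 1)) := by
  have hs0 : 0 < s.re := by linarith
  have hsplit : ∀ u ∈ Ioi x, ((⌊u - β⌋ : ℂ) + 1) * (u : ℂ) ^ (-(s + 1)) =
      (u : ℂ) ^ (-s) + (1 / 2 - β) * (u : ℂ) ^ (-(s + 1))
        - saw (u - β) * (u : ℂ) ^ (-(s + 1)) := by
    intro u (hu : x < u)
    have hfloor : (⌊u - β⌋ : ℂ) + 1 = u - β + 1 / 2 - saw (u - β) := by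
      rw [saw]; push_cast; ring
    rw [hfloor, show -s = 1 - (s + 1) by ring, cpow_one_sub_eq_mul_cpow_neg (hx.trans hu)]
    ring
  have hIa : IntegrableOn (fun u : ℝ ↦ (u : ℂ) ^ (-s)) (Ioi x) :=
    integrableOn_Ioi_cpow_of_lt (by simp; linarith) hx
  have hIb : IntegrableOn (fun u : ℝ ↦ (u : ℂ) ^ (-(s + 1))) (Ioi x) :=
    integrableOn_Ioi_cpow_of_lt (by simp; linarith) hx
  rw [setIntegral_congr_fun measurableSet_Ioi hsplit,
    integral_sub ?_ ?_, integral_add hIa (hIb.const_mul _), integral_const_mul,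
    integral_Ioi_cpow_neg hx hs, integral_Ioi_cpow_neg_add_one hx hs0]
  · exact hIa.add (hIb.const_mul _)
  · exact integrableOn_Ioi_mul_cpow_neg_add_one (by fun_prop) (fun u ↦ norm_saw_le _) hx hs0

lemma tsum_natCast_add_cpow_neg_eq_mul_integral {x β : ℝ} {s : ℂ} (hx : 0 < x) (hxβ : x ≤ β)
    (hβx : β ≤ x + 1) (hs : 1 < s.re) :
    ∑' n : ℕ, ((n : ℂ) + β) ^ (-s) =
      s * ∫ u in Ioi x, ((⌊u - β⌋ : ℂ) + 1) * (u : ℂ) ^ (-(s + 1)) := by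
  have hxn (n : ℕ) : x ≤ n + β := by linarith [n.cast_nonneg (α := ℝ)]
  have hsum : Summable fun n : ℕ ↦ ((n : ℝ) + β) ^ (-s.re) := by
    refine ((Real.summable_one_div_nat_add_rpow β s.re).mpr hs).congr fun n ↦ ?_
    have hpos : 0 < (n : ℝ) + β := hx.trans_le (hxn n)
    rw [abs_of_pos hpos, one_div, Real.rpow_neg hpos.le]
  have h := tsum_cpow_neg_eq_mul_integral_count hx hxn (by linarith) hsum
  push_cast at h
  rw [h, setIntegral_congr_fun measurableSet_Ioi fun u (hu : x < u) ↦ by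
    rw [tsum_indicator_Ici_natCast_add (by linarith)]]

theorem tsum_natCast_add_cpow_neg_eq {x β : ℝ} {s : ℂ} (hx : 0 < x) (hxβ : x < β)
    (hβx : β ≤ x + 1) (hs : 1 < s.re) :
    ∑' n : ℕ, ((n : ℂ) + β) ^ (-s) =
      (x : ℂ) ^ (1 - s) / (s - 1) + saw (x - β) * (x : ℂ) ^ (-s)
        - s * ∫ u in Ioi x, (saw (u - β) : ℂ) / (u : ℂ) ^ (s + 1) := by
  have hs_ne : s ≠ 0 := fun h ↦ by norm_num [h] at hs
  have hs1_ne : s - 1 ≠ 0 := sub_ne_zero.mpr fun h ↦ by simp [h] at hs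
  have hsaw : saw (x - β) = x - β + 1 / 2 := by
    have : ⌊x - β⌋ = -1 := Int.floor_eq_iff.mpr ⟨by push_cast; linarith, by push_cast; linarith⟩
    rw [saw, this]; push_cast; ring
  have hdiv : ∫ u in Ioi x, (saw (u - β) : ℂ) / (u : ℂ) ^ (s + 1) =
      ∫ u in Ioi x, (saw (u - β) : ℂ) * (u : ℂ) ^ (-(s + 1)) := by
    simp_rw [cpow_neg, div_eq_mul_inv]
  rw [tsum_natCast_add_cpow_neg_eq_mul_integral hx hxβ.le hβx hs,
    integral_Ioi_floor_add_one_mul_cpow hx hs, hdiv, hsaw, cpow_one_sub_eq_mul_cpow_neg hx]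
  push_cast
  field_simp
  ring

theorem hurwitzZeta_sub_eq_of_one_lt_re {α x : ℝ} {s : ℂ} (hα : 0 ≤ α) (hα1 : α ≤ 1)
    (hx : 0 < x) (hs : 1 < s.re) :
    HurwitzZeta.hurwitzZeta (α : UnitAddCircle) s - (x : ℂ) ^ (1 - s) / (s - 1) =
      (∑ n ∈ (Finset.range (⌊x - α⌋₊ + 1)).filter (fun n : ℕ => (n : ℝ) ≤ x - α),
        ((n : ℂ) + (α : ℂ)) ^ (-s))
      + (saw (x - α) : ℂ) * (x : ℂ) ^ (-s)
      - s * ∫ u in Set.Ioi x, (saw (u - α) : ℂ) / (u : ℂ) ^ (s + 1) := by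
  set N := (⌊x - α⌋ + 1).toNat
  have hN : (N : ℝ) = ⌊x - α⌋ + 1 := cast_toNat_floor_add_one (by linarith)
  have hxβ : x < N + α := by linarith [Int.lt_floor_add_one (x - α)]
  have hβx : N + α ≤ x + 1 := by linarith [Int.floor_le (x - α)]
  have hζ : HasSum (fun n : ℕ ↦ ((n : ℂ) + α) ^ (-s)) (HurwitzZeta.hurwitzZeta α s) := by
    simpa only [cpow_neg, one_div] using HurwitzZeta.hasSum_hurwitzZeta_of_one_lt_re ⟨hα, hα1⟩ hs
  have hsaw (u : ℝ) : saw (u - (N + α)) = saw (u - α) := by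
    rw [show u - (N + α) = u - α - N by ring, saw_sub_natCast]
  have htail : ∑' n : ℕ, (((n + N : ℕ) : ℂ) + α) ^ (-s) =
      ∑' n : ℕ, ((n : ℂ) + (N + α : ℝ)) ^ (-s) := by
    push_cast; simp only [add_assoc]
  rw [filter_le_sub_eq_range, ← hζ.tsum_eq, ← hζ.summable.sum_add_tsum_nat_add N, htail,
    tsum_natCast_add_cpow_neg_eq hx hxβ hβx hs]
  simp only [hsaw]
  ring

lemma isPreconnected_setOf_re_pos_ne_one : IsPreconnected {z : ℂ | 0 < z.re ∧ z ≠ 1} := by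
  have himage : (fun z : ℂ ↦ (Real.exp z.re : ℂ) + z.im * I) '' {0}ᶜ =
      {z : ℂ | 0 < z.re ∧ z ≠ 1} := by
    ext w
    simp only [mem_image, mem_compl_iff, mem_singleton_iff]
    constructor
    · rintro ⟨z, hz, rfl⟩
      refine ⟨by simp [exp_ofReal_re, Real.exp_pos], fun h ↦ hz ?_⟩
      simp [Complex.ext_iff, exp_ofReal_re] at h
      exact Complex.ext h.1 h.2
    · rintro ⟨hre, hne⟩
      refine ⟨Real.log w.re + w.im * I, fun h ↦ hne ?_, ?_⟩
      · simp [Complex.ext_iff] at h ⊢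
        exact ⟨by rcases h.1 with h' | h' | h' <;> linarith, h.2⟩
      · simp [Real.exp_log hre]
  rw [← himage]
  exact (isConnected_compl_singleton_of_one_lt_rank (by simp) 0).isPreconnected.image _
    (by fun_prop)

lemma differentiableOn_hurwitzZeta_sub_cpow_div (a : UnitAddCircle) {x : ℝ} (hx : x ≠ 0) :
    DifferentiableOn ℂ (fun z ↦ HurwitzZeta.hurwitzZeta a z - (x : ℂ) ^ (1 - z) / (z - 1))
      {1}ᶜ := fun z (hz : z ≠ 1) ↦
  ((HurwitzZeta.differentiableAt_hurwitzZeta a hz).sub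
    ((((differentiableAt_const 1).sub differentiableAt_id).const_cpow
      (Or.inl (ofReal_ne_zero.mpr hx))).div (differentiableAt_id.sub_const 1)
      (sub_ne_zero.mpr hz))).differentiableWithinAt

/-- For `0 < α ≤ 1`, `x > 0` and complex `s` with `Re s > 0`, `s ≠ 1`,
`ζ(s,α) - x^{1-s}/(s-1) = ∑_{0 ≤ n ≤ x-α} (n+α)^{-s} + ψ(x-α)·x^{-s}
  - s·∫_x^∞ ψ(u-α)/u^{s+1} du`. -/
theorem stmt2 (α : ℝ) (hα : 0 < α) (hα1 : α ≤ 1) (x : ℝ) (hx : 0 < x)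
    (s : ℂ) (hs : 0 < s.re) (hs1 : s ≠ 1) :
    HurwitzZeta.hurwitzZeta (α : UnitAddCircle) s - (x : ℂ) ^ (1 - s) / (s - 1) =
      (∑ n ∈ (Finset.range (⌊x - α⌋₊ + 1)).filter (fun n : ℕ => (n : ℝ) ≤ x - α),
        ((n : ℂ) + (α : ℂ)) ^ (-s))
      + (saw (x - α) : ℂ) * (x : ℂ) ^ (-s)
      - s * ∫ u in Set.Ioi x, (saw (u - α) : ℂ) / (u : ℂ) ^ (s + 1) := by
  set U := {z : ℂ | 0 < z.re ∧ z ≠ 1}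
  have hU : IsOpen U := (isOpen_lt continuous_const continuous_re).inter isOpen_ne
  have hLHS := (differentiableOn_hurwitzZeta_sub_cpow_div α hx.ne').mono fun z (hz : z ∈ U) ↦ hz.2
  have hI := differentiableOn_integral_Ioi_div_cpow (f := fun u ↦ (saw (u - α) : ℂ))
    (by fun_prop) (fun u ↦ norm_saw_le _) hx
  have hRHS : DifferentiableOn ℂ (fun z ↦
      (∑ n ∈ (Finset.range (⌊x - α⌋₊ + 1)).filter (fun n : ℕ => (n : ℝ) ≤ x - α),
        ((n : ℂ) + (α : ℂ)) ^ (-z))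
      + (saw (x - α) : ℂ) * (x : ℂ) ^ (-z)
      - z * ∫ u in Set.Ioi x, (saw (u - α) : ℂ) / (u : ℂ) ^ (z + 1)) U := fun z hz ↦ by
    have hz0 : -z ≠ 0 := neg_ne_zero.mpr fun h ↦ by simp [U, h] at hz
    refine (((DifferentiableAt.fun_sum fun n _ ↦ ?_).add ?_).sub
      (differentiableAt_id.mul ?_)).differentiableWithinAt
    · exact differentiableAt_id.neg.const_cpow (Or.inr hz0)
    · exact (differentiableAt_id.neg.const_cpow (Or.inr hz0)).const_mul _
    · exact hI.differentiableAt ((isOpen_lt continuous_const continuous_re).mem_nhds hz.1)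
  refine (hLHS.analyticOnNhd hU).eqOn_of_preconnected_of_eventuallyEq (hRHS.analyticOnNhd hU)
    isPreconnected_setOf_re_pos_ne_one (z₀ := 2) (by norm_num [U]) ?_ ⟨hs, hs1⟩
  filter_upwards [(isOpen_lt continuous_const continuous_re).mem_nhds
    (by norm_num : (1 : ℝ) < (2 : ℂ).re)] with z hz
  exact hurwitzZeta_sub_eq_of_one_lt_re hα.le hα1 hx hz
end

section
/- For 0 < λ < 1 and 0 < α ≤ 1, the Lerch zeta function φ(λ,α,s) = ∑_{n≥0} e^{2πiλn}(n+α)^{-s} (defined for Re(s) > 1 and extended to an entire function of s) satisfies, for every integer r ≥ 1, the bound | φ^{(r)}(λ,α,1)/r! - (-1)^r (log α)^r/(r!·α) | ≪ (r^r e^{-r}/r!)·(1/λ + 1/(1-λ)), with an absolute implied constant. -/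
open Complex Filter Topology Real

open Finset Set

/-!
For real `σ > 1` the `r`-th derivative is the absolutely convergent series
`∑ e^{2πiλn} (-log (n + α))^r (n + α)^{-σ}`. Apart from its term `n = 0` it equals
`(-1)^r ∑_{n ≥ 1} v_n z^n` with `z = e^{2πiλ}` and `v_n = f (log (n + α))`, `f u = u^r e^{-σu}`.
The profile `f` increases up to `u = r/σ` and decreases afterwards, so `0 ≤ v_n ≤ M = r^r e^{-r}`
and `(v_n)` has total variation at most `2M`. Abel summation against the geometric sums, which are
at most `2/|z - 1|`, bounds the tail by `6M/|z - 1|`, and `|z - 1| = 2 sin πλ ≥ 4 min(λ, 1 - λ)`.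
The derivative of the entire function is continuous, so the bound survives `σ → 1⁺`, where the
term `n = 0` is `(-1)^r (log α)^r / α`.
-/

section Profile

variable (r : ℕ) {σ : ℝ}

theorem hasDerivAt_pow_mul_exp_neg_mul {u : ℝ} (hu : u ≠ 0) :
    HasDerivAt (fun u => u ^ r * Real.exp (-σ * u))
      ((r - σ * u) * u ^ r * Real.exp (-σ * u) / u) u := by
  refine ((hasDerivAt_pow r u).fun_mul ((hasDerivAt_id' u).const_mul (-σ)).exp).congr_deriv ?_
  rcases r with _ | r
  · field_simp; simp [mul_comm]
  · field_simp; push_cast; ring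

theorem monotoneOn_pow_mul_exp_neg_mul (hσ : 0 < σ) :
    MonotoneOn (fun u => u ^ r * Real.exp (-σ * u)) (Icc 0 (r / σ)) := by
  refine monotoneOn_of_hasDerivWithinAt_nonneg (convex_Icc _ _) (by fun_prop)
    (fun u hu => (hasDerivAt_pow_mul_exp_neg_mul r ?_).hasDerivWithinAt) fun u hu => ?_
  all_goals rw [interior_Icc] at hu
  · exact hu.1.ne'
  · have : σ * u ≤ r := by rw [← le_div_iff₀' hσ]; exact hu.2.le
    exact div_nonneg (mul_nonneg (mul_nonneg (by linarith) (pow_nonneg hu.1.le r))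
      (Real.exp_pos _).le) hu.1.le

theorem antitoneOn_pow_mul_exp_neg_mul (hσ : 0 < σ) :
    AntitoneOn (fun u => u ^ r * Real.exp (-σ * u)) (Ici (r / σ)) := by
  have hc : 0 ≤ r / σ := by positivity
  refine antitoneOn_of_hasDerivWithinAt_nonpos (convex_Ici _) (by fun_prop)
    (fun u hu => (hasDerivAt_pow_mul_exp_neg_mul r ?_).hasDerivWithinAt) fun u hu => ?_
  all_goals rw [interior_Ici] at hu
  · exact (hc.trans_lt hu).ne'
  · have hu0 : 0 < u := hc.trans_lt hu
    have : (r : ℝ) ≤ σ * u := by rw [← div_le_iff₀' hσ]; exact le_of_lt hu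
    exact div_nonpos_of_nonpos_of_nonneg (mul_nonpos_of_nonpos_of_nonneg
      (mul_nonpos_of_nonpos_of_nonneg (by linarith) (pow_nonneg hu0.le r)) (Real.exp_pos _).le)
      hu0.le

theorem pow_mul_exp_neg_mul_le (hσ : 0 < σ) {u : ℝ} (hu : 0 ≤ u) :
    u ^ r * Real.exp (-σ * u) ≤ (r / σ) ^ r * Real.exp (-r) := by
  have hc : 0 ≤ r / σ := by positivity
  have hpeak : (r / σ) ^ r * Real.exp (-r) = (r / σ) ^ r * Real.exp (-σ * (r / σ)) := by
    field_simp
  rw [hpeak]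
  rcases le_total u (r / σ) with h | h
  · exact monotoneOn_pow_mul_exp_neg_mul r hσ ⟨hu, h⟩ ⟨hc, le_rfl⟩ h
  · exact antitoneOn_pow_mul_exp_neg_mul r hσ (mem_Ici.2 le_rfl) h h

end Profile

theorem sum_abs_sub_le_of_monotoneOn_antitoneOn {f : ℝ → ℝ} {t : ℕ → ℝ} {a c M : ℝ}
    (ht : Monotone t) (hat : ∀ i, a ≤ t i) (hf0 : ∀ i, 0 ≤ f (t i)) (hfM : ∀ i, f (t i) ≤ M)
    (hmono : MonotoneOn f (Icc a c)) (hanti : AntitoneOn f (Ici c)) (N : ℕ) :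
    ∑ i ∈ range N, |f (t (i + 1)) - f (t i)| ≤ 2 * M := by
  -- an increasing majorant of the variation of `f ∘ t`: `f` up to the peak, `2 M - f` after it
  set w : ℝ → ℝ := fun x => if x ≤ c then f x else 2 * M - f x
  have hM : 0 ≤ M := (hf0 0).trans (hfM 0)
  have hstep : ∀ i, |f (t (i + 1)) - f (t i)| ≤ w (t (i + 1)) - w (t i) := by
    intro i
    have hti : t i ≤ t (i + 1) := ht i.le_succ
    simp only [w]
    split_ifs with h₁ h₀ h₀
    · rw [abs_of_nonneg (sub_nonneg.2 (hmono ⟨hat i, h₀⟩ ⟨hat _, h₁⟩ hti))]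
    · linarith
    · rw [abs_le]; constructor <;> linarith [hfM i, hfM (i + 1)]
    · rw [abs_of_nonpos (sub_nonpos.2 (hanti (not_le.1 h₀).le (not_le.1 h₁).le hti))]
      linarith
  calc ∑ i ∈ range N, |f (t (i + 1)) - f (t i)|
      ≤ ∑ i ∈ range N, (w (t (i + 1)) - w (t i)) := sum_le_sum fun i _ => hstep i
    _ = w (t N) - w (t 0) := sum_range_sub (w ∘ t) N
    _ ≤ 2 * M := by
      simp only [w]
      split_ifs <;> linarith [hf0 0, hfM 0, hf0 N, hfM N]

theorem norm_sum_range_smul_le {E : Type*} [SeminormedAddCommGroup E] [NormedSpace ℝ E]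
    {v : ℕ → ℝ} {g : ℕ → E} {M V K : ℝ} (hv : ∀ i, |v i| ≤ M)
    (hV : ∀ N, ∑ i ∈ range N, |v (i + 1) - v i| ≤ V)
    (hg : ∀ n, ‖∑ i ∈ range n, g i‖ ≤ K) (N : ℕ) :
    ‖∑ i ∈ range N, v i • g i‖ ≤ (M + V) * K := by
  have hK : 0 ≤ K := (norm_nonneg _).trans (hg 0)
  rw [sum_range_by_parts, add_mul]
  refine (norm_sub_le _ _).trans (add_le_add ?_ ?_)
  · rw [norm_smul, Real.norm_eq_abs]
    exact mul_le_mul (hv _) (hg N) (norm_nonneg _) ((abs_nonneg _).trans (hv 0))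
  · calc ‖∑ i ∈ range (N - 1), (v (i + 1) - v i) • ∑ j ∈ range (i + 1), g j‖
        ≤ ∑ i ∈ range (N - 1), |v (i + 1) - v i| * K := by
          refine (norm_sum_le _ _).trans (sum_le_sum fun i _ => ?_)
          rw [norm_smul, Real.norm_eq_abs]
          exact mul_le_mul_of_nonneg_left (hg _) (abs_nonneg _)
      _ ≤ V * K := by rw [← sum_mul]; exact mul_le_mul_of_nonneg_right (hV _) hK

theorem norm_geom_sum_le {𝕜 : Type*} [NormedField 𝕜] {z : 𝕜} (hz : ‖z‖ ≤ 1) (hz1 : z ≠ 1)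
    (n : ℕ) : ‖∑ i ∈ range n, z ^ i‖ ≤ 2 / ‖z - 1‖ := by
  rw [geom_sum_eq hz1, norm_div]
  gcongr
  calc ‖z ^ n - 1‖ ≤ ‖z ^ n‖ + ‖(1 : 𝕜)‖ := norm_sub_le _ _
    _ ≤ 2 := by rw [norm_pow, norm_one]; linarith [pow_le_one₀ (norm_nonneg z) hz (n := n)]

theorem norm_exp_two_pi_I_mul (lam : ℝ) : ‖cexp (2 * π * I * lam)‖ = 1 := by
  rw [show 2 * π * I * lam = ((2 * π * lam : ℝ) : ℂ) * I by push_cast; ring]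
  exact norm_exp_ofReal_mul_I _

theorem four_mul_min_le_norm_exp_two_pi_I_mul_sub_one {lam : ℝ} (h0 : 0 ≤ lam) (h1 : lam ≤ 1) :
    4 * min lam (1 - lam) ≤ ‖cexp (2 * π * I * lam) - 1‖ := by
  have hsin : 2 * min lam (1 - lam) ≤ Real.sin (π * lam) := by
    rcases le_total lam (1 / 2) with h | h
    · calc 2 * min lam (1 - lam) ≤ 2 / π * (π * lam) := by
            field_simp; exact min_le_left _ _
        _ ≤ Real.sin (π * lam) :=
            Real.mul_le_sin (by positivity) (by nlinarith [Real.pi_pos])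
    · calc 2 * min lam (1 - lam) ≤ 2 / π * (π * (1 - lam)) := by
            field_simp; exact min_le_right _ _
        _ ≤ Real.sin (π * (1 - lam)) :=
            Real.mul_le_sin (by nlinarith [Real.pi_pos]) (by nlinarith [Real.pi_pos])
        _ = Real.sin (π * lam) := by rw [mul_one_sub, Real.sin_pi_sub]
  have h := Complex.norm_exp_I_mul_ofReal_sub_one (2 * π * lam)
  rw [show I * ((2 * π * lam : ℝ) : ℂ) = 2 * π * I * lam by push_cast; ring,
    show 2 * π * lam / 2 = π * lam by ring] at h
  rw [h, Real.norm_eq_abs]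
  exact (by linarith : 4 * min lam (1 - lam) ≤ 2 * Real.sin (π * lam)).trans (le_abs_self _)

section LerchSeries

variable (lam α : ℝ)

/-- The `k`-th `s`-derivative of `e^{2πiλn} (n + α)^{-s}`, with the power written as an
exponential. -/
noncomputable def lerchTerm (k n : ℕ) (s : ℂ) : ℂ :=
  cexp (2 * π * I * lam * n) * (-Real.log (n + α) : ℂ) ^ k * cexp (-s * Real.log (n + α))

noncomputable def lerchSeries (k : ℕ) (s : ℂ) : ℂ := ∑' n, lerchTerm lam α k n s

theorem hasDerivAt_lerchTerm (k n : ℕ) (s : ℂ) :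
    HasDerivAt (lerchTerm lam α k n) (lerchTerm lam α (k + 1) n s) s := by
  have h := (((hasDerivAt_id' s).fun_neg.mul_const (Real.log (n + α) : ℂ)).cexp).const_mul
    (cexp (2 * π * I * lam * n) * (-Real.log (n + α) : ℂ) ^ k)
  refine h.congr_deriv ?_
  simp only [lerchTerm, pow_succ]
  ring

theorem norm_lerchTerm (k n : ℕ) (s : ℂ) :
    ‖lerchTerm lam α k n s‖ = |Real.log (n + α)| ^ k * Real.exp (-s.re * Real.log (n + α)) := by
  rw [lerchTerm, norm_mul, norm_mul, norm_exp, norm_exp, norm_pow, norm_neg, norm_real,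
    Real.norm_eq_abs]
  simp [Complex.mul_re]

variable {α}

/-- For `n ≥ 1` the logarithm is nonnegative, and the peak bound for `u ^ k * e ^ {-(σ - τ) u}`
trades the logarithmic factor for the power `(n + α) ^ {τ - σ}`, where `1 < τ < σ`. -/
theorem summable_abs_log_pow_mul_exp_neg_mul (hα : 0 < α) (k : ℕ) {σ : ℝ} (hσ : 1 < σ) :
    Summable fun n : ℕ => |Real.log (n + α)| ^ k * Real.exp (-σ * Real.log (n + α)) := by
  obtain ⟨τ, hτ1, hτσ⟩ := exists_between hσ
  rw [← summable_nat_add_iff 1]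
  have hτ : Summable fun n : ℕ => ((n + 1 : ℕ) : ℝ) ^ (-τ) :=
    (summable_nat_add_iff 1).2 (Real.summable_nat_rpow.2 (by linarith))
  refine (hτ.mul_left ((k / (σ - τ)) ^ k * Real.exp (-k))).of_nonneg_of_le
    (fun n => by positivity) fun n => ?_
  have hn : (1 : ℝ) ≤ (n + 1 : ℕ) := Nat.one_le_cast.2 n.succ_pos
  set u := Real.log ((n + 1 : ℕ) + α)
  have hu : 0 ≤ u := Real.log_nonneg (by linarith)
  have hrpow : (((n + 1 : ℕ) : ℝ) + α) ^ (-τ) = Real.exp (-τ * u) := by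
    rw [Real.rpow_def_of_pos (by linarith), mul_comm]
  calc |u| ^ k * Real.exp (-σ * u)
      = u ^ k * Real.exp (-(σ - τ) * u) * ((n + 1 : ℕ) + α) ^ (-τ) := by
        rw [abs_of_nonneg hu, hrpow, mul_assoc, ← Real.exp_add]
        ring_nf
    _ ≤ (k / (σ - τ)) ^ k * Real.exp (-k) * ((n + 1 : ℕ) : ℝ) ^ (-τ) :=
        mul_le_mul (pow_mul_exp_neg_mul_le k (by linarith) hu)
          (Real.rpow_le_rpow_of_nonpos (by linarith) (by linarith) (by linarith)) (by positivity)
          (by positivity)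

theorem summable_lerchTerm (hα : 0 < α) (k : ℕ) {s : ℂ} (hs : 1 < s.re) :
    Summable fun n => lerchTerm lam α k n s :=
  .of_norm <| by
    simpa only [norm_lerchTerm] using summable_abs_log_pow_mul_exp_neg_mul hα k hs

theorem hasDerivAt_lerchSeries (hα : 0 < α) (k : ℕ) {s : ℂ} (hs : 1 < s.re) :
    HasDerivAt (lerchSeries lam α k) (lerchSeries lam α (k + 1) s) s := by
  -- a bounded strip: when `α < 1` the term `n = 0` grows as `Re s → ∞`
  obtain ⟨σ₀, hσ₀, hσ₀s⟩ := exists_between hs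
  set σ₁ := s.re + 1
  set L : ℕ → ℝ := fun n => Real.log (n + α)
  have hexp : ∀ n, ∀ x ∈ Icc σ₀ σ₁,
      Real.exp (-x * L n) ≤ Real.exp (-σ₀ * L n) + Real.exp (-σ₁ * L n) := by
    intro n x hx
    rcases le_total 0 (L n) with h | h
    · exact (Real.exp_le_exp.2 (by nlinarith [hx.1])).trans
        (le_add_of_nonneg_right (Real.exp_pos _).le)
    · exact (Real.exp_le_exp.2 (by nlinarith [hx.2])).trans
        (le_add_of_nonneg_left (Real.exp_pos _).le)
  have hu : Summable fun n => |L n| ^ (k + 1) *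
      (Real.exp (-σ₀ * L n) + Real.exp (-σ₁ * L n)) := by
    simp only [mul_add]
    exact (summable_abs_log_pow_mul_exp_neg_mul hα _ (by linarith)).add
      (summable_abs_log_pow_mul_exp_neg_mul hα _ (by linarith))
  have hU : IsOpen {z : ℂ | σ₀ < z.re ∧ z.re < σ₁} :=
    (isOpen_lt continuous_const continuous_re).inter (isOpen_lt continuous_re continuous_const)
  have hs' : s ∈ {z : ℂ | σ₀ < z.re ∧ z.re < σ₁} := ⟨by linarith, by linarith⟩
  refine hasDerivAt_tsum_of_isPreconnected hu hU
    ((convex_halfSpace_re_gt σ₀).inter (convex_halfSpace_re_lt σ₁)).isPreconnected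
    (fun n y _ => hasDerivAt_lerchTerm lam α k n y) (fun n y hy => ?_) hs'
    (summable_lerchTerm lam hα k hs) hs'
  rw [norm_lerchTerm]
  exact mul_le_mul_of_nonneg_left (hexp n _ ⟨hy.1.le, hy.2.le⟩) (by positivity)

theorem iteratedDeriv_eq_lerchSeries (hα : 0 < α) {φ : ℂ → ℂ}
    (hφ : ∀ s : ℂ, 1 < s.re → HasSum
      (fun n : ℕ => cexp (2 * π * I * lam * n) * ((n : ℂ) + α) ^ (-s)) (φ s))
    (k : ℕ) {s : ℂ} (hs : 1 < s.re) : iteratedDeriv k φ s = lerchSeries lam α k s := by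
  induction k generalizing s with
  | zero =>
    rw [iteratedDeriv_zero, ← (hφ s hs).tsum_eq, lerchSeries]
    refine tsum_congr fun n => ?_
    have hpos : (0 : ℝ) < n + α := by positivity
    rw [lerchTerm, pow_zero, mul_one, show ((n : ℂ) + α) = ((n + α : ℝ) : ℂ) by push_cast; rfl,
      cpow_def_of_ne_zero (ofReal_ne_zero.2 hpos.ne'), ← ofReal_log hpos.le, mul_comm (-s)]
  | succ k ih =>
    have hev : iteratedDeriv k φ =ᶠ[𝓝 s] lerchSeries lam α k :=
      eventually_of_mem ((isOpen_lt continuous_const continuous_re).mem_nhds hs) fun _ hz => ih hz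
    rw [iteratedDeriv_succ, hev.deriv_eq, (hasDerivAt_lerchSeries lam hα k hs).deriv]

end LerchSeries

section TailBound

variable {lam α : ℝ}

theorem lerchTerm_zero_one (hα : 0 < α) (k : ℕ) :
    lerchTerm lam α k 0 1 = (-1) ^ k * (Real.log α : ℂ) ^ k / α := by
  have h : cexp (-Real.log α) = (α : ℂ)⁻¹ := by
    rw [← ofReal_neg, ← ofReal_exp, Real.exp_neg, Real.exp_log hα, ofReal_inv]
  simp only [lerchTerm, CharP.cast_eq_zero, zero_add, mul_zero, Complex.exp_zero, one_mul,
    neg_one_mul, h]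
  rw [neg_pow]
  ring

theorem lerchTerm_succ_ofReal (k j : ℕ) (σ : ℝ) :
    lerchTerm lam α k (j + 1) σ = (-1) ^ k * cexp (2 * π * I * lam) *
      ((Real.log (j + 1 + α) ^ k * Real.exp (-σ * Real.log (j + 1 + α))) •
        cexp (2 * π * I * lam) ^ j) := by
  have h : cexp (-σ * Real.log (j + 1 + α)) = (Real.exp (-σ * Real.log (j + 1 + α)) : ℂ) := by
    push_cast; rfl
  have hz : cexp (2 * π * I * lam * (j + 1 : ℕ)) =
      cexp (2 * π * I * lam) * cexp (2 * π * I * lam) ^ j := by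
    rw [← Complex.exp_nat_mul, ← Complex.exp_add]; push_cast; ring_nf
  rw [lerchTerm, hz, real_smul]
  push_cast
  rw [h, neg_pow]
  ring

theorem norm_lerchSeries_sub_lerchTerm_zero_le (hl0 : 0 < lam) (hl1 : lam < 1) (hα : 0 < α)
    (r : ℕ) {σ : ℝ} (hσ : 1 < σ) :
    ‖lerchSeries lam α r σ - lerchTerm lam α r 0 σ‖ ≤
      6 * ((r : ℝ) ^ r * Real.exp (-r)) / ‖cexp (2 * π * I * lam) - 1‖ := by
  set z := cexp (2 * π * I * lam)
  set M := (r : ℝ) ^ r * Real.exp (-r)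
  set t : ℕ → ℝ := fun j => Real.log (j + 1 + α)
  set f : ℝ → ℝ := fun u => u ^ r * Real.exp (-σ * u)
  have ht0 : ∀ j, 0 ≤ t j := fun j => Real.log_nonneg (by linarith [j.cast_nonneg (α := ℝ)])
  have ht : Monotone t := fun i j hij =>
    Real.log_le_log (by positivity) (by gcongr)
  have hf0 : ∀ j, 0 ≤ f (t j) := fun j => by have := ht0 j; positivity
  have hfM : ∀ j, f (t j) ≤ M := fun j =>
    (pow_mul_exp_neg_mul_le r (by linarith) (ht0 j)).trans <| mul_le_mul_of_nonneg_right
      (pow_le_pow_left₀ (by positivity) (div_le_self r.cast_nonneg hσ.le) r) (Real.exp_pos _).le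
  have hz : ‖z‖ = 1 := norm_exp_two_pi_I_mul lam
  have hz1 : 0 < ‖z - 1‖ := (mul_pos four_pos (lt_min hl0 (by linarith))).trans_le
    (four_mul_min_le_norm_exp_two_pi_I_mul_sub_one hl0.le hl1.le)
  have hpartial : ∀ N, ‖∑ j ∈ range N, f (t j) • z ^ j‖ ≤ (M + 2 * M) * (2 / ‖z - 1‖) :=
    norm_sum_range_smul_le (fun j => (abs_of_nonneg (hf0 j)).trans_le (hfM j))
      (sum_abs_sub_le_of_monotoneOn_antitoneOn ht ht0 hf0 hfM
        (monotoneOn_pow_mul_exp_neg_mul r (by linarith))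
        (antitoneOn_pow_mul_exp_neg_mul r (by linarith)))
      (norm_geom_sum_le hz.le fun h => by simp [h] at hz1)
  have hsum := summable_lerchTerm lam hα r (s := σ) (by simpa using hσ)
  rw [lerchSeries, hsum.tsum_eq_zero_add, add_sub_cancel_left]
  refine le_of_tendsto' ((summable_nat_add_iff 1).2 hsum).hasSum.tendsto_sum_nat.norm fun N => ?_
  simp_rw [lerchTerm_succ_ofReal]
  rw [← mul_sum, norm_mul, norm_mul, norm_pow, norm_neg, norm_one, one_pow, hz, one_mul, one_mul]
  exact (hpartial N).trans_eq (by ring)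

theorem norm_iteratedDeriv_sub_lerchTerm_zero_le (hl0 : 0 < lam) (hl1 : lam < 1) (hα : 0 < α)
    {φ : ℂ → ℂ} (hφd : Differentiable ℂ φ)
    (hφ : ∀ s : ℂ, 1 < s.re → HasSum
      (fun n : ℕ => cexp (2 * π * I * lam * n) * ((n : ℂ) + α) ^ (-s)) (φ s)) (r : ℕ) :
    ‖iteratedDeriv r φ 1 - lerchTerm lam α r 0 1‖ ≤
      6 * ((r : ℝ) ^ r * Real.exp (-r)) / ‖cexp (2 * π * I * lam) - 1‖ := by
  have hcont : Continuous fun s => iteratedDeriv r φ s - lerchTerm lam α r 0 s :=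
    (hφd.contDiff.continuous_iteratedDeriv r le_top).sub
      (continuous_iff_continuousAt.2 fun s => (hasDerivAt_lerchTerm lam α r 0 s).continuousAt)
  have hlim : Tendsto (fun σ : ℝ => iteratedDeriv r φ σ - lerchTerm lam α r 0 σ) (𝓝[>] 1)
      (𝓝 (iteratedDeriv r φ 1 - lerchTerm lam α r 0 1)) := by
    simpa [Function.comp_def] using
      ((hcont.comp continuous_ofReal).tendsto 1).mono_left (nhdsWithin_le_nhds (s := Ioi 1))
  refine le_of_tendsto hlim.norm (eventually_nhdsWithin_of_forall fun σ (hσ : 1 < σ) => ?_)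
  rw [iteratedDeriv_eq_lerchSeries lam hα hφ r (by simpa using hσ)]
  exact norm_lerchSeries_sub_lerchTerm_zero_le hl0 hl1 hα r hσ

end TailBound

/-- for the Lerch zeta function `φ(λ,α,s)` (the entire continuation of
`∑_{n≥0} e^{2πiλn}(n+α)^{-s}`, `0 < λ < 1`), for every `r ≥ 1`,
`|φ^{(r)}(λ,α,1)/r! - (-1)^r (log α)^r/(r!·α)| ≪ (r^r e^{-r}/r!)(1/λ + 1/(1-λ))`
with an absolute implied constant. -/
theorem stmt9 : ∃ C : ℝ, 0 < C ∧ ∀ (lam α : ℝ), 0 < lam → lam < 1 → 0 < α → α ≤ 1 →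
    ∀ φ : ℂ → ℂ, Differentiable ℂ φ →
    (∀ s : ℂ, 1 < s.re → HasSum
      (fun n : ℕ => Complex.exp (2 * Real.pi * Complex.I * lam * n) * ((n : ℂ) + α) ^ (-s))
      (φ s)) →
    ∀ r : ℕ, 1 ≤ r →
    ‖iteratedDeriv r φ 1 / (Nat.factorial r : ℂ)
        - (-1) ^ r * (Real.log α : ℂ) ^ r / ((Nat.factorial r : ℂ) * α)‖ ≤
      C * ((r : ℝ) ^ r * Real.exp (-(r : ℝ)) / (Nat.factorial r : ℝ))
        * (1 / lam + 1 / (1 - lam)) := by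
  refine ⟨3 / 2, by norm_num, fun lam α hl0 hl1 hα _ φ hφd hφ r _ => ?_⟩
  set M := (r : ℝ) ^ r * Real.exp (-r)
  have hmin : 1 / min lam (1 - lam) ≤ 1 / lam + 1 / (1 - lam) := by
    rcases min_choice lam (1 - lam) with h | h <;> rw [h] <;>
      linarith [one_div_pos.2 hl0, one_div_pos.2 (sub_pos.2 hl1)]
  have hz := four_mul_min_le_norm_exp_two_pi_I_mul_sub_one hl0.le hl1.le
  have hbound := norm_iteratedDeriv_sub_lerchTerm_zero_le hl0 hl1 hα hφd hφ r
  rw [lerchTerm_zero_one hα] at hbound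
  calc ‖iteratedDeriv r φ 1 / (r.factorial : ℂ) - (-1) ^ r * (Real.log α : ℂ) ^ r /
        ((r.factorial : ℂ) * α)‖
      = ‖iteratedDeriv r φ 1 - (-1) ^ r * (Real.log α : ℂ) ^ r / α‖ / r.factorial := by
        rw [← Complex.norm_natCast, ← norm_div, sub_div, div_div, mul_comm (α : ℂ)]
    _ ≤ 6 * M / (4 * min lam (1 - lam)) / r.factorial := by
        gcongr
        exact hbound.trans (div_le_div_of_nonneg_left (by positivity)
          (mul_pos four_pos (lt_min hl0 (sub_pos.2 hl1))) hz)
    _ = 3 / 2 * (M / r.factorial) * (1 / min lam (1 - lam)) := by ring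
    _ ≤ 3 / 2 * (M / r.factorial) * (1 / lam + 1 / (1 - lam)) := by gcongr
end

section
/- For a non-principal Dirichlet character χ mod q, the Taylor coefficients γ_n(χ) of L(s,χ) = ∑_{n≥0} γ_n(χ)(s-1)^n at s = 1 satisfy γ_n(χ) = (1/q) ∑_{a=1}^q χ(a) ∑_{j=0}^n ((-1)^j/j!) (log q)^j γ_{n-j}(a/q), where γ_m(α) are the generalized Stieltjes constants of the Hurwitz zeta function ζ(s,α). -/
open Complex Filter Topology

open scoped ENNReal Nat

/-! Since `∑ₐ χ(a) = 0`, the polar parts cancel and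
`L(s, χ) = q⁻ˢ ∑ₐ χ(a) (ζ(s, a/q) - 1/(s - 1))`. Writing `q⁻ˢ = q⁻¹ exp(-(s - 1) log q)` and
multiplying the exponential series with the Laurent series of each `ζ(s, a/q)` (a Cauchy product of
absolutely convergent series near `s = 1`) expands `L(s, χ)` in powers of `s - 1` with the stated
coefficients. Both sides are then power series with the same sum on a punctured disc around `1`;
they are analytic at `1`, so by the identity theorem their coefficients agree. -/

namespace FormalMultilinearSeries

variable {𝕜 : Type*} [NontriviallyNormedField 𝕜] {c : ℕ → 𝕜}

theorem le_radius_ofScalars_of_summable {z : 𝕜} (h : Summable fun n => c n * z ^ n) :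
    (‖z‖₊ : ℝ≥0∞) ≤ (ofScalars 𝕜 c).radius :=
  (ofScalars 𝕜 c).le_radius_of_tendsto (l := 0) <| by
    simpa [norm_mul, norm_pow] using h.tendsto_atTop_zero.norm

theorem summable_norm_ofScalars_mul_pow {z : 𝕜}
    (h : (‖z‖₊ : ℝ≥0∞) < (ofScalars 𝕜 c).radius) :
    Summable fun n => ‖c n * z ^ n‖ := by
  simpa [norm_mul, norm_pow] using (ofScalars 𝕜 c).summable_norm_mul_pow h

end FormalMultilinearSeries

section PowerSeriesCoefficients

open FormalMultilinearSeries

variable {𝕜 : Type*} [NontriviallyNormedField 𝕜] {c d : ℕ → 𝕜} {x : 𝕜}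

theorem eventually_summable_norm_mul_pow_sub
    (h : ∀ᶠ s in 𝓝[≠] x, Summable fun n => c n * (s - x) ^ n) :
    ∀ᶠ s in 𝓝 x, Summable fun n => ‖c n * (s - x) ^ n‖ := by
  obtain ⟨s, hs, hsx⟩ := (h.and self_mem_nhdsWithin).exists
  filter_upwards [Metric.ball_mem_nhds x (norm_pos_iff.2 (sub_ne_zero.2 hsx))] with t ht
  have htx : ‖t - x‖₊ < ‖s - x‖₊ := by
    rw [← NNReal.coe_lt_coe]
    simpa [dist_eq_norm] using ht
  exact summable_norm_ofScalars_mul_pow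
    ((ENNReal.coe_lt_coe.2 htx).trans_le (le_radius_ofScalars_of_summable hs))

theorem eq_zero_of_eventually_hasSum_mul_pow_sub_zero [CompleteSpace 𝕜]
    (h : ∀ᶠ s in 𝓝[≠] x, HasSum (fun n => c n * (s - x) ^ n) 0) : c = 0 := by
  obtain ⟨s, hs, hsx⟩ := (h.and self_mem_nhdsWithin).exists
  set p := ofScalars 𝕜 c
  have hr : 0 < p.radius := (ENNReal.coe_pos.2 (nnnorm_pos.2 (sub_ne_zero.2 hsx))).trans_le
    (le_radius_ofScalars_of_summable hs.summable)
  have hp : HasFPowerSeriesAt (fun t => p.sum (t - x)) p x := by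
    simpa using ((p.hasFPowerSeriesOnBall hr).hasFPowerSeriesAt.comp_sub x)
  have hzero : ∀ᶠ t in 𝓝 x, p.sum (t - x) = 0 :=
    hp.analyticAt.frequently_zero_iff_eventually_zero.1 <| (h.mono fun t ht => by
      simp only [p, FormalMultilinearSeries.sum, ofScalars_apply_eq, smul_eq_mul]
      exact ht.tsum_eq).frequently
  exact (ofScalars_series_eq_zero 𝕜).1 (hp.eq_zero_of_eventually hzero)

theorem eq_of_eventually_hasSum_mul_pow_sub [CompleteSpace 𝕜] {f : 𝕜 → 𝕜}
    (hc : ∀ᶠ s in 𝓝[≠] x, HasSum (fun n => c n * (s - x) ^ n) (f s))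
    (hd : ∀ᶠ s in 𝓝[≠] x, HasSum (fun n => d n * (s - x) ^ n) (f s)) : c = d := by
  rw [← sub_eq_zero]
  refine eq_zero_of_eventually_hasSum_mul_pow_sub_zero (x := x) ?_
  filter_upwards [hc, hd] with s hcs hds
  simpa [sub_mul] using hcs.sub hds

end PowerSeriesCoefficients

theorem hasSum_sum_range_mul_mul_pow_of_summable_norm {R : Type*} [NormedCommRing R]
    {a b : ℕ → R} {z A B : R}
    (ha : HasSum (fun n => a n * z ^ n) A) (hb : HasSum (fun n => b n * z ^ n) B)
    (ha' : Summable fun n => ‖a n * z ^ n‖) (hb' : Summable fun n => ‖b n * z ^ n‖) :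
    HasSum (fun n => (∑ k ∈ Finset.range (n + 1), a k * b (n - k)) * z ^ n) (A * B) := by
  have := hasSum_sum_range_mul_of_summable_norm' ha' ha.summable hb' hb.summable
  rw [ha.tsum_eq, hb.tsum_eq] at this
  convert this using 2 with n
  rw [Finset.sum_mul]
  refine Finset.sum_congr rfl fun k hk => ?_
  rw [← pow_mul_pow_sub z (Finset.mem_range_succ_iff.1 hk)]
  ring

theorem neg_one_pow_div_factorial_mul_pow {𝕜 : Type*} [Field 𝕜] (w z : 𝕜) (j : ℕ) :
    (-1) ^ j / (j ! : 𝕜) * w ^ j * z ^ j = (-w * z) ^ j / j ! := by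
  ring

namespace Complex

theorem hasSum_cpow_neg {x : ℂ} (hx : x ≠ 0) (z : ℂ) :
    HasSum (fun j => (-1) ^ j / (j ! : ℂ) * log x ^ j * z ^ j) (x ^ (-z)) := by
  simp only [neg_one_pow_div_factorial_mul_pow]
  rw [cpow_def_of_ne_zero hx, exp_eq_exp_ℂ, mul_neg, ← neg_mul]
  exact NormedSpace.expSeries_div_hasSum_exp _

theorem summable_norm_neg_one_pow_div_factorial_mul_pow (w z : ℂ) :
    Summable fun j => ‖(-1) ^ j / (j ! : ℂ) * w ^ j * z ^ j‖ := by
  simpa only [neg_one_pow_div_factorial_mul_pow] using NormedSpace.norm_expSeries_div_summable _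

end Complex

theorem ZMod.sum_Icc_one_natCast {M : Type*} [AddCommMonoid M] (q : ℕ) [NeZero q]
    (F : ZMod q → M) : ∑ a ∈ Finset.Icc 1 q, F a = ∑ x, F x := by
  -- `q - (-x).val ∈ [1, q]` is a preimage of `x`, also when `x = 0`
  have hsurj : Set.SurjOn (Nat.cast : ℕ → ZMod q) (Finset.Icc 1 q) Set.univ := fun x _ =>
    ⟨q - (-x).val, by simp [Nat.one_le_iff_ne_zero, Nat.sub_eq_zero_iff_le, (-x).val_lt],
      by simp [Nat.cast_sub (-x).val_le]⟩
  exact Finset.sum_nbij _ (fun _ _ => Finset.mem_univ _)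
    (Finset.injOn_of_surjOn_of_card_le _ (fun _ _ => Finset.mem_coe.2 (Finset.mem_univ _))
      (by simpa using hsurj) (by simp)) (by simpa using hsurj) fun _ _ => rfl

namespace DirichletCharacter

variable {q : ℕ} [NeZero q]

theorem LFunction_eq_sum_Icc (χ : DirichletCharacter ℂ q) (s : ℂ) :
    LFunction χ s = (q : ℂ) ^ (-s) * ∑ a ∈ Finset.Icc 1 q,
      χ (a : ZMod q) * HurwitzZeta.hurwitzZeta ((a / q : ℝ) : UnitAddCircle) s := by
  rw [LFunction, ZMod.LFunction, ← ZMod.sum_Icc_one_natCast]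
  simp only [ZMod.toAddCircle_natCast]

theorem LFunction_eq_sum_Icc_sub {χ : DirichletCharacter ℂ q} (hχ : χ ≠ 1) (s C : ℂ) :
    LFunction χ s = (q : ℂ) ^ (-s) * ∑ a ∈ Finset.Icc 1 q,
      χ (a : ZMod q) * (HurwitzZeta.hurwitzZeta ((a / q : ℝ) : UnitAddCircle) s - C) := by
  have hχ0 : ∑ a ∈ Finset.Icc 1 q, χ (a : ZMod q) = 0 := by
    rw [ZMod.sum_Icc_one_natCast q χ]
    exact MulChar.sum_eq_zero_of_ne_one hχ
  simp [mul_sub, Finset.sum_sub_distrib, ← Finset.sum_mul, hχ0, LFunction_eq_sum_Icc]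

theorem hasSum_LFunction_of_hasSum_hurwitzZeta {χ : DirichletCharacter ℂ q} (hχ : χ ≠ 1)
    {s : ℂ} {γH : ℕ → ℕ → ℂ}
    (hH : ∀ a ∈ Finset.Icc 1 q, HasSum (fun m => γH a m * (s - 1) ^ m)
      (HurwitzZeta.hurwitzZeta ((a / q : ℝ) : UnitAddCircle) s - 1 / (s - 1)))
    (hH_norm : ∀ a ∈ Finset.Icc 1 q, Summable fun m => ‖γH a m * (s - 1) ^ m‖) :
    HasSum (fun n => ((1 / q : ℂ) * ∑ a ∈ Finset.Icc 1 q, χ (a : ZMod q) *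
      ∑ j ∈ Finset.range (n + 1), (-1) ^ j / (j ! : ℂ) * (Real.log q : ℂ) ^ j * γH a (n - j)) *
        (s - 1) ^ n) (LFunction χ s) := by
  have hq : (q : ℂ) ≠ 0 := NeZero.ne _
  have hexp := Complex.hasSum_cpow_neg hq (s - 1)
  rw [← Complex.natCast_log] at hexp
  have hterm : ∀ a ∈ Finset.Icc 1 q, HasSum _ _ := fun a ha =>
    (hasSum_sum_range_mul_mul_pow_of_summable_norm hexp (hH a ha)
      (Complex.summable_norm_neg_one_pow_div_factorial_mul_pow _ _) (hH_norm a ha)).mul_left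
      (χ (a : ZMod q))
  have hpow : (q : ℂ) ^ (-s) = 1 / q * (q : ℂ) ^ (-(s - 1)) := by
    rw [neg_sub, Complex.cpow_sub _ _ hq, Complex.cpow_one, Complex.cpow_neg]
    field_simp
  have hLs : LFunction χ s = 1 / q * ∑ a ∈ Finset.Icc 1 q, χ (a : ZMod q) *
      ((q : ℂ) ^ (-(s - 1)) *
        (HurwitzZeta.hurwitzZeta ((a / q : ℝ) : UnitAddCircle) s - 1 / (s - 1))) := by
    rw [LFunction_eq_sum_Icc_sub hχ s (1 / (s - 1)), hpow, Finset.mul_sum, Finset.mul_sum]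
    exact Finset.sum_congr rfl fun a _ => by ring
  rw [hLs]
  refine ((hasSum_sum hterm).mul_left (1 / q : ℂ)).congr_fun fun m => ?_
  simp only [Finset.sum_mul, Finset.mul_sum, mul_assoc]

end DirichletCharacter

/-- for a non-principal Dirichlet character `χ` mod `q`, if `γχ n` are the
Taylor coefficients of `L(s,χ)` at `s = 1` and `γH a m` the Laurent coefficients of
`ζ(s, a/q)` at `s = 1`, then
`γχ n = (1/q) ∑_{a=1}^q χ(a) ∑_{j=0}^n ((-1)^j/j!)(log q)^j γH a (n-j)`. -/
theorem stmt17 (q : ℕ) [NeZero q] (χ : DirichletCharacter ℂ q) (hχ : χ ≠ 1)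
    (γχ : ℕ → ℂ)
    (hγχ : ∀ s : ℂ, ‖s - 1‖ < 1 → HasSum (fun n : ℕ => γχ n * (s - 1) ^ n)
      (DirichletCharacter.LFunction χ s))
    (γH : ℕ → ℕ → ℂ)
    (hγH : ∀ a ∈ Finset.Icc 1 q, ∀ᶠ s : ℂ in 𝓝[≠] 1,
      HasSum (fun m : ℕ => γH a m * (s - 1) ^ m)
        (HurwitzZeta.hurwitzZeta ((a / q : ℝ) : UnitAddCircle) s - 1 / (s - 1)))
    (n : ℕ) :
    γχ n = (1 / q : ℂ) * ∑ a ∈ Finset.Icc 1 q, χ (a : ZMod q) *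
      ∑ j ∈ Finset.range (n + 1),
        ((-1) ^ j / (Nat.factorial j : ℂ)) * (Real.log q : ℂ) ^ j * γH a (n - j) := by
  have hL : ∀ᶠ s in 𝓝[≠] (1 : ℂ), HasSum (fun n => γχ n * (s - 1) ^ n)
      (DirichletCharacter.LFunction χ s) :=
    eventually_nhdsWithin_of_eventually_nhds <| Metric.eventually_nhds_iff.2
      ⟨1, one_pos, fun {s} hs => hγχ s (by rwa [← dist_eq_norm])⟩
  have hH_norm : ∀ a ∈ Finset.Icc 1 q, ∀ᶠ s in 𝓝[≠] (1 : ℂ),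
      Summable fun m => ‖γH a m * (s - 1) ^ m‖ := fun a ha =>
    eventually_nhdsWithin_of_eventually_nhds <|
      eventually_summable_norm_mul_pow_sub ((hγH a ha).mono fun _ hs => hs.summable)
  revert n
  rw [← funext_iff]
  refine eq_of_eventually_hasSum_mul_pow_sub hL ?_
  filter_upwards [(eventually_all_finset _).2 hγH, (eventually_all_finset _).2 hH_norm]
    with s hH hH_norm
  exact DirichletCharacter.hasSum_LFunction_of_hasSum_hurwitzZeta hχ hH hH_norm
end
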